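/- arXiv:2212.10387 — 7 statements merged into one kernel-verified Lean document; each statement's English description precedes it below -/
import Mathlib

section
/- Let p be a causal access path, r a replication scheme that is latency-robust for p, and t a natural number with h(p,r) ≤ t. Then for every single-object extension r' of r, h(p,r') ≤ t. -/
/-- The access function ρ along a causal access path `p` (given by its
sequence of objects indexed by ℕ): the root is accessed at its original
server `d (p 0)`, and each subsequent object is accessed at the current
server if that server holds a copy of it, and at its original server
otherwise. -/
def rho {V S : Type*} [DecidableEq S] (d : V → S) (r : V → Finset S)
    (p : ℕ → V) : ℕ → S
  | 0 => d (p 0)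
  | i + 1 => if rho d r p i ∈ r (p (i + 1)) then rho d r p i else d (p (i + 1))

/-- The latency `h(p, r)` of a path of length `n`: the number of
consecutive accesses occurring on different servers. -/
def latency {V S : Type*} [DecidableEq S] (d : V → S) (r : V → Finset S)
    (p : ℕ → V) (n : ℕ) : ℕ :=
  ((Finset.range (n - 1)).filter fun i => rho d r p i ≠ rho d r p (i + 1)).card

/-- `⟨p j, …, p k⟩` is a server-local subpath of the path `p` of length `n`
under the scheme `r`: a maximal contiguous block on which ρ is constant. -/
def IsLocalSubpath {V S : Type*} [DecidableEq S] (d : V → S) (r : V → Finset S)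
    (p : ℕ → V) (n j k : ℕ) : Prop :=
  j ≤ k ∧ k < n ∧
  (∀ i, j ≤ i → i < k → rho d r p i = rho d r p (i + 1)) ∧
  (j = 0 ∨ rho d r p (j - 1) ≠ rho d r p j) ∧
  (k = n - 1 ∨ rho d r p k ≠ rho d r p (k + 1))

/-- `r` is latency-robust for the path `p` of length `n`. -/
def Robust {V S : Type*} [DecidableEq S] (d : V → S) (r : V → Finset S)
    (p : ℕ → V) (n : ℕ) : Prop :=
  ∀ j k, IsLocalSubpath d r p n j k →
    ∀ x y, j ≤ x → x < y → y ≤ k → d (p x) ∈ r (p y)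

/-- `r'` extends `r`. -/
def Extends {V S : Type*} (r r' : V → Finset S) : Prop := ∀ v, r v ⊆ r' v

/-- `r'` is a single-object extension of `r`. -/
def SingleExt {V S : Type*} [DecidableEq S] (r r' : V → Finset S) : Prop :=
  ∃ w s, s ∉ r w ∧ r' w = insert s (r w) ∧ ∀ v, v ≠ w → r' v = r v

section Aux

variable {V S : Type*} [DecidableEq S] (d : V → S) (r : V → Finset S) (p : ℕ → V)

lemma rho_succ (i : ℕ) :
    rho d r p (i + 1) =
      if rho d r p i ∈ r (p (i + 1)) then rho d r p i else d (p (i + 1)) := rfl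

lemma rho_mem_of_eq (hr : ∀ v, d v ∈ r v) {i : ℕ}
    (h : rho d r p i = rho d r p (i + 1)) : rho d r p i ∈ r (p (i + 1)) := by
  by_cases hc : rho d r p i ∈ r (p (i + 1))
  · exact hc
  · rw [rho_succ, if_neg hc] at h
    rw [h]; exact hr _

lemma rho_sync (r' : V → Finset S) (hr : ∀ v, d v ∈ r v) (hsub : ∀ v, r v ⊆ r' v)
    {j : ℕ} (hj : rho d r' p j = rho d r p j) :
    ∀ i, j ≤ i → (∀ l, j ≤ l → l < i → rho d r p l = rho d r p (l + 1)) →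
      rho d r' p i = rho d r p i := by
  intro i
  induction i with
  | zero =>
    intro h _
    have hj0 : j = 0 := Nat.le_zero.mp h
    subst hj0
    exact hj
  | succ i ih =>
    intro hji hconst
    rcases Nat.lt_or_ge j (i + 1) with hlt | hge
    · have hji' : j ≤ i := Nat.lt_succ_iff.mp hlt
      have heq := ih hji' (fun l hl hli => hconst l hl (Nat.lt_succ_of_lt hli))
      have hcl := hconst i hji' (Nat.lt_succ_self i)
      have hmem := rho_mem_of_eq d r p hr hcl
      rw [rho_succ d r', heq, if_pos (hsub _ hmem)]
      exact hcl
    · have : j = i + 1 := le_antisymm hji hge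
      rw [← this]; exact hj

end Aux


section Aux2
variable {V S : Type*} [DecidableEq S] (d : V → S) (r : V → Finset S) (p : ℕ → V)

lemma robust_local (n : ℕ) (hn : 1 ≤ n) (hrob : Robust d r p n)
    {x y : ℕ} (hxy : x < y) (hyn : y < n)
    (hconst : ∀ i, x ≤ i → i < y → rho d r p i = rho d r p (i + 1)) :
    d (p x) ∈ r (p y) := by
  classical
  set P : ℕ → Prop := fun b => rho d r p (b - 1) ≠ rho d r p b with hP
  set j : ℕ := Nat.findGreatest P x with hjdef
  obtain ⟨hjle, hjP, hjgr⟩ := (Nat.findGreatest_eq_iff (P := P)).mp hjdef.symm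
  -- exact end
  have hQ : ∃ m, y + m = n - 1 ∨ rho d r p (y + m) ≠ rho d r p (y + m + 1) := by
    refine ⟨n - 1 - y, Or.inl ?_⟩
    omega
  set m0 : ℕ := Nat.find hQ with hm0
  set k : ℕ := y + m0 with hkdef
  have hkQ : k = n - 1 ∨ rho d r p k ≠ rho d r p (k + 1) := Nat.find_spec hQ
  have hkle : k ≤ n - 1 := by
    have := Nat.find_min' hQ (m := n - 1 - y) (Or.inl (by omega))
    omega
  have hkconst : ∀ l, y ≤ l → l < k → rho d r p l = rho d r p (l + 1) := by
    intro l hl hlk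
    have hmin := Nat.find_min hQ (m := l - y) (by omega)
    push_neg at hmin
    have : y + (l - y) = l := by omega
    rw [this] at hmin
    exact hmin.2
  have hsub : IsLocalSubpath d r p n j k := by
    refine ⟨by omega, by omega, ?_, ?_, hkQ⟩
    · intro i hji hik
      rcases Nat.lt_or_ge i x with h1 | h1
      · have := hjgr (show j < i + 1 by omega) (show i + 1 ≤ x by omega)
        simp only [hP, not_not] at this
        simpa using this
      rcases Nat.lt_or_ge i y with h2 | h2
      · exact hconst i h1 h2
      · exact hkconst i h2 hik
    · rcases Nat.eq_zero_or_pos j with h | h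
      · exact Or.inl h
      · exact Or.inr (hjP (by omega))
  exact hrob j k hsub x y hjle hxy (by omega)

end Aux2

section Aux3
variable {V S : Type*} [DecidableEq S] (d : V → S) (r : V → Finset S) (p : ℕ → V)

lemma key_no_two_hops (r' : V → Finset S) (n : ℕ) (hn : 1 ≤ n)
    (hr : ∀ v, d v ∈ r v) (hsub : ∀ v, r v ⊆ r' v) (hrob : Robust d r p n)
    {i₁ i₂ : ℕ} (h12 : i₁ < i₂) (h2n : i₂ < n - 1)
    (hconst : ∀ m, i₁ < m → m ≤ i₂ → rho d r p m = rho d r p (m + 1))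
    (hop1 : rho d r' p i₁ ≠ rho d r' p (i₁ + 1)) :
    rho d r' p i₂ = rho d r' p (i₂ + 1) := by
  have hd1 : rho d r' p (i₁ + 1) = d (p (i₁ + 1)) := by
    by_cases hc : rho d r' p i₁ ∈ r' (p (i₁ + 1))
    · exact absurd (by rw [rho_succ, if_pos hc]) hop1
    · rw [rho_succ, if_neg hc]
  have hstay : ∀ m, i₁ + 1 ≤ m → m ≤ i₂ + 1 → rho d r' p m = d (p (i₁ + 1)) := by
    intro m hm
    induction m, hm using Nat.le_induction with
    | base => intro _; exact hd1
    | succ m hm ih =>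
      intro hm2
      have ihm := ih (by omega)
      have hmem : d (p (i₁ + 1)) ∈ r (p (m + 1)) := by
        refine robust_local d r p n hn hrob (x := i₁ + 1) (y := m + 1)
          (by omega) (by omega) ?_
        intro l hl hlm
        exact hconst l (by omega) (by omega)
      rw [rho_succ, ihm, if_pos (hsub _ hmem)]
  rw [hstay i₂ (by omega) (by omega), hstay (i₂ + 1) (by omega) (by omega)]

end Aux3

/-- If `r` is latency-robust for `p` and `h(p,r) ≤ t`, then for
every single-object extension `r'` of `r`, `h(p,r') ≤ t`. -/
theorem single_extension_preserves_latency_bound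
    {V S : Type*} [Fintype V] [Fintype S] [DecidableEq V] [DecidableEq S]
    (d : V → S) (r r' : V → Finset S)
    (hr : ∀ v, d v ∈ r v)
    (p : ℕ → V) (n : ℕ) (hn : 1 ≤ n)
    (t : ℕ)
    (hrob : Robust d r p n)
    (hlat : latency d r p n ≤ t)
    (hext : SingleExt r r') :
    latency d r' p n ≤ t := by
  unfold latency at hlat ⊢
  obtain ⟨w, s, hs, hw, hvw⟩ := hext
  have hsub : ∀ v, r v ⊆ r' v := by
    intro v
    by_cases hv : v = w
    · subst hv; rw [hw]; exact Finset.subset_insert _ _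
    · rw [hvw v hv]
  have h0 : rho d r' p 0 = rho d r p 0 := rfl
  have claim1 : ∀ i, rho d r' p i ≠ rho d r' p (i + 1) →
      ∃ b, b ≤ i ∧ rho d r p b ≠ rho d r p (b + 1) := by
    intro i hi
    by_contra hno
    push_neg at hno
    have hc : ∀ l, 0 ≤ l → l < i + 1 → rho d r p l = rho d r p (l + 1) :=
      fun l _ hl => hno l (by omega)
    have e1 := rho_sync d r p r' hr hsub h0 i (Nat.zero_le _)
      (fun l hl hli => hc l hl (by omega))
    have e2 := rho_sync d r p r' hr hsub h0 (i + 1) (Nat.zero_le _) hc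
    exact hi (e1.trans ((hno i le_rfl).trans e2.symm))
  classical
  refine le_trans (Finset.card_le_card_of_injOn
    (fun i => Nat.findGreatest (fun b => rho d r p b ≠ rho d r p (b + 1)) i) ?_ ?_) hlat
  · intro i hi
    simp only [Finset.mem_coe, Finset.mem_filter, Finset.mem_range] at hi ⊢
    obtain ⟨b, hb, hhop⟩ := claim1 i hi.2
    exact ⟨lt_of_le_of_lt (Nat.findGreatest_le i) hi.1, Nat.findGreatest_spec (P := fun b => rho d r p b ≠ rho d r p (b + 1)) hb hhop⟩
  · have main : ∀ a b : ℕ, a < b → b < n - 1 →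
        Nat.findGreatest (fun c => rho d r p c ≠ rho d r p (c + 1)) a =
          Nat.findGreatest (fun c => rho d r p c ≠ rho d r p (c + 1)) b →
        rho d r' p a ≠ rho d r' p (a + 1) → rho d r' p b ≠ rho d r' p (b + 1) → False := by
      intro a b hab hbn hgab hopa hopb
      apply hopb
      refine key_no_two_hops d r p r' n hn hr hsub hrob hab hbn ?_ hopa
      intro m hm1 hm2
      have hga : Nat.findGreatest (fun c => rho d r p c ≠ rho d r p (c + 1)) a ≤ a :=
        Nat.findGreatest_le a
      have := Nat.findGreatest_is_greatest
        (P := fun c => rho d r p c ≠ rho d r p (c + 1)) (n := b) (k := m)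
        (by omega) hm2
      exact not_not.mp this
    intro i₁ h1 i₂ h2 hgeq
    simp only [Finset.coe_filter, Set.mem_setOf_eq, Finset.mem_range] at h1 h2
    by_contra hne
    rcases Nat.lt_or_ge i₁ i₂ with h | h
    · exact main i₁ i₂ h h2.1 hgeq h1.2 h2.2
    · exact main i₂ i₁ (by omega) h1.1 hgeq.symm h2.2 h1.2
end

section
/- Let W be a finite set of causal access paths with latency bounds t_p, and let f : V → ℚ be a storage-cost function with f(v) > 0 for all v. Suppose r minimizes the total storage cost Σ_{v ∈ V} f(v)·|r(v)| among all replication schemes r' satisfying h(p,r') ≤ t_p for every p ∈ W (and r itself satisfies these bounds). Then r is an upward replication scheme: for every object v and every server s ∈ r(v) \ {d(v)}, there exist a path p ∈ W and a non-root occurrence of v in p with predecessor u such that ρ_r(u) = s, and consequently ρ_r(v) = ρ_r(u) at that occurrence. -/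
/-- Any cost-optimal replication scheme satisfying the latency
bounds of a workload `W` (a finite family of causal access paths `P i` of
length `n i` with latency bounds `t i`) is an upward replication scheme:
every replica that is not the original copy of its object is accessed right
after its predecessor on some path in the workload, at the very server where
that predecessor is accessed. -/
theorem optimal_scheme_is_upward
    {V S ι : Type*} [Fintype V] [Fintype S] [Fintype ι]
    [DecidableEq V] [DecidableEq S]
    (d : V → S)
    (P : ι → ℕ → V) (n : ι → ℕ) (hn : ∀ i, 1 ≤ n i) (t : ι → ℕ)
    (f : V → ℚ) (hf : ∀ v, 0 < f v)
    (r : V → Finset S) (hr : ∀ v, d v ∈ r v)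
    (hfeas : ∀ i, latency d r (P i) (n i) ≤ t i)
    (hmin : ∀ r' : V → Finset S, (∀ v, d v ∈ r' v) →
      (∀ i, latency d r' (P i) (n i) ≤ t i) →
      ∑ v, f v * ((r v).card : ℚ) ≤ ∑ v, f v * ((r' v).card : ℚ)) :
    ∀ v s, s ∈ r v → s ≠ d v →
      ∃ i : ι, ∃ m : ℕ, 1 ≤ m ∧ m < n i ∧ P i m = v ∧
        rho d r (P i) (m - 1) = s ∧
        rho d r (P i) m = rho d r (P i) (m - 1) := by

  intro v s hs hsd
  by_contra hcon
  push_neg at hcon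
  set r' : V → Finset S := fun w => if w = v then (r v).erase s else r w with hr'
  have key : ∀ i m, 1 ≤ m → m < n i → P i m = v → rho d r (P i) (m - 1) ≠ s := by
    intro i m h1 h2 h3 heq
    apply hcon i m h1 h2 h3 heq
    obtain ⟨k, rfl⟩ : ∃ k, m = k + 1 := ⟨m - 1, (Nat.succ_pred_eq_of_pos h1).symm⟩
    simp only [Nat.add_sub_cancel] at heq ⊢
    rw [rho, heq, h3, if_pos hs]
  have same : ∀ i j, j < n i → rho d r' (P i) j = rho d r (P i) j := by
    intro i j
    induction j with
    | zero => intro _; simp [rho]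
    | succ k ih =>
      intro hk
      have hk' : k < n i := Nat.lt_of_succ_lt hk
      rw [rho, rho, ih hk']
      by_cases hv : P i (k + 1) = v
      · have hne : rho d r (P i) k ≠ s := by
          have := key i (k + 1) (by omega) hk hv
          simpa using this
        simp [hr', hv, Finset.mem_erase, hne]
      · simp [hr', hv]
  have hlat : ∀ i, latency d r' (P i) (n i) = latency d r (P i) (n i) := by
    intro i
    unfold latency
    congr 1
    apply Finset.filter_congr
    intro x hx
    simp only [Finset.mem_range] at hx
    have h1 : x < n i := by omega
    have h2 : x + 1 < n i := by have := hn i; omega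
    simp [same i x h1, same i (x + 1) h2]
  have hd' : ∀ w, d w ∈ r' w := by
    intro w
    by_cases hw : w = v
    · subst hw; simp [hr', Finset.mem_erase, Ne.symm hsd, hr w]
    · simp [hr', hw, hr w]
  have hfeas' : ∀ i, latency d r' (P i) (n i) ≤ t i := fun i => (hlat i) ▸ hfeas i
  have hlt : ∑ w, f w * ((r' w).card : ℚ) < ∑ w, f w * ((r w).card : ℚ) := by
    apply Finset.sum_lt_sum
    · intro w _
      by_cases hw : w = v
      · subst hw
        have hle : ((r w).erase s).card ≤ (r w).card := Finset.card_le_card (Finset.erase_subset _ _)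
        simp only [hr', if_pos rfl]
        exact mul_le_mul_of_nonneg_left (by exact_mod_cast hle) (hf w).le
      · simp [hr', hw]
    · refine ⟨v, Finset.mem_univ v, ?_⟩
      have hc : ((r v).erase s).card < (r v).card := Finset.card_erase_lt_of_mem hs
      simp only [hr', if_pos rfl]
      exact mul_lt_mul_of_pos_left (by exact_mod_cast hc) (hf v)
  exact absurd (hmin r' hd' hfeas') (not_le.mpr hlt)
end

section
/- Let W be a finite set of causal access paths and r a replication scheme. Suppose an object v and a server s ∈ r(v) \ {d(v)} are such that for every path p ∈ W and every non-root occurrence of v in p with predecessor u, ρ_r(u) ≠ s. Then the scheme r'' obtained from r by removing s from r(v) (and leaving r unchanged on all other objects) satisfies ρ_{r''} = ρ_r along every path p ∈ W, and hence h(p, r'') = h(p, r) for every p ∈ W. -/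
/-- If a replica `s ∈ r(v) \ {d(v)}` is never the server at
which the predecessor of an occurrence of `v` is accessed, on any path of the
workload, then removing it does not change the access function ρ along any
path of the workload, and hence does not change any path latency. -/
theorem removing_unused_replica_preserves_access
    {V S ι : Type*} [Fintype V] [Fintype S] [Fintype ι]
    [DecidableEq V] [DecidableEq S]
    (d : V → S)
    (P : ι → ℕ → V) (n : ι → ℕ)
    (r : V → Finset S) (hr : ∀ v, d v ∈ r v)
    (v : V) (s : S) (hs : s ∈ r v) (hsd : s ≠ d v)
    (hnopred : ∀ i : ι, ∀ m : ℕ, 1 ≤ m → m < n i → P i m = v →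
      rho d r (P i) (m - 1) ≠ s) :
    (∀ i : ι, ∀ m : ℕ, m < n i →
      rho d (fun x => if x = v then (r v).erase s else r x) (P i) m
        = rho d r (P i) m) ∧
    (∀ i : ι,
      latency d (fun x => if x = v then (r v).erase s else r x) (P i) (n i)
        = latency d r (P i) (n i)) := by
  have key : ∀ i : ι, ∀ m : ℕ, m < n i →
      rho d (fun x => if x = v then (r v).erase s else r x) (P i) m
        = rho d r (P i) m := by
    intro i m
    induction m with
    | zero => intro _; rfl
    | succ m ih =>
      intro hm
      have hm' : m < n i := Nat.lt_of_succ_lt hm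
      have ihm := ih hm'
      simp only [rho, ihm]
      by_cases hv : P i (m + 1) = v
      · have hne : rho d r (P i) m ≠ s := by
          have := hnopred i (m + 1) (Nat.le_add_left 1 m) hm hv
          simpa using this
        simp [hv, Finset.mem_erase, hne]
      · simp [hv]
  refine ⟨key, fun i => ?_⟩
  unfold latency
  congr 1
  apply Finset.filter_congr
  intro m hm
  rw [Finset.mem_range] at hm
  have h1 : m < n i := lt_of_lt_of_le hm (Nat.sub_le _ _)
  have h2 : m + 1 < n i := by omega
  rw [key i m h1, key i (m+1) h2]
end

section
/- Let r' be a single-object extension of a replication scheme r, let p = ⟨v₁,…,vₙ⟩ be a causal access path, and suppose there exists an index with ρ_r ≠ ρ_{r'}; let m be the smallest such index. Then m > 1, ρ_r(v_{m−1}) ≠ ρ_r(v_m) (i.e., v_m is the first element of its server-local subpath under r), ρ_r(v_m) = d(v_m), and ρ_{r'}(v_m) = ρ_{r'}(v_{m−1}) = ρ_r(v_{m−1}). -/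
/-- If `r'` is a single-object extension of `r` and `m` is the
smallest index of the path `p` (of length `n`) at which the access functions
under `r` and `r'` differ, then `m` is not the root index, `v_m` is the first
element of its server-local subpath under `r` (i.e. `ρ_r(v_{m-1}) ≠ ρ_r(v_m)`),
`ρ_r(v_m) = d(v_m)`, and `ρ_{r'}(v_m) = ρ_{r'}(v_{m-1}) = ρ_r(v_{m-1})`. -/
theorem first_divergence_of_single_extension
    {V S : Type*} [Fintype V] [Fintype S] [DecidableEq V] [DecidableEq S]
    (d : V → S) (r r' : V → Finset S)
    (hr : ∀ v, d v ∈ r v)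
    (hext : SingleExt r r')
    (p : ℕ → V) (n : ℕ)
    (m : ℕ) (hm : m < n)
    (hdiff : rho d r p m ≠ rho d r' p m)
    (hmin : ∀ i, i < m → rho d r p i = rho d r' p i) :
    1 ≤ m ∧
    rho d r p (m - 1) ≠ rho d r p m ∧
    rho d r p m = d (p m) ∧
    rho d r' p m = rho d r' p (m - 1) ∧
    rho d r' p (m - 1) = rho d r p (m - 1) := by

  obtain ⟨w, s, hs, hw, hother⟩ := hext
  have hsub : ∀ v, r v ⊆ r' v := by
    intro v
    by_cases hv : v = w
    · subst hv; rw [hw]; exact Finset.subset_insert _ _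
    · rw [hother v hv]
  obtain _ | k := m
  · exact absurd rfl hdiff
  have hk : rho d r p k = rho d r' p k := hmin k (Nat.lt_succ_self k)
  have hnot : rho d r p k ∉ r (p (k + 1)) := by
    intro hin
    apply hdiff
    rw [rho, rho, if_pos hin, if_pos (by rw [← hk]; exact hsub _ hin), hk]
  have hrm : rho d r p (k + 1) = d (p (k + 1)) := by rw [rho, if_neg hnot]
  have hin' : rho d r' p k ∈ r' (p (k + 1)) := by
    by_contra hno
    apply hdiff
    rw [rho, if_neg hnot]
    conv_lhs => rw [show d (p (k+1)) = rho d r' p (k+1) by rw [rho, if_neg hno]]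
  have hrm' : rho d r' p (k + 1) = rho d r' p k := by rw [rho, if_pos hin']
  refine ⟨Nat.succ_le_succ (Nat.zero_le k), ?_, hrm, by simpa using hrm', by simpa using hk.symm⟩
  simp only [Nat.add_sub_cancel]
  intro heq
  rw [heq, hrm] at hnot; exact hnot (hr _)
end

section
/- Let r be a replication scheme that is latency-robust for a causal access path p = ⟨v₁,…,vₙ⟩, let r' be an extension of r, and let ⟨v_j,…,v_k⟩ be a server-local subpath of p under r. If ρ_{r'}(v_x) = d(v_x) for some index x with j ≤ x ≤ k, then ρ_{r'}(v_y) = d(v_x) for every y with x ≤ y ≤ k; in particular, the accesses to v_x,…,v_k under r' require no distributed traversals among them. -/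
/-- Let `r` be latency-robust for `p`, `r'` an extension of `r`,
and `⟨v_j, …, v_k⟩` a server-local subpath of `p` under `r`. If
`ρ_{r'}(v_x) = d(v_x)` for some `j ≤ x ≤ k`, then `ρ_{r'}(v_y) = d(v_x)` for
every `x ≤ y ≤ k`; in particular the accesses to `v_x, …, v_k` under `r'`
require no distributed traversals among them. -/
theorem robust_subpath_stays_local_under_extension
    {V S : Type*} [Fintype V] [Fintype S] [DecidableEq V] [DecidableEq S]
    (d : V → S) (r r' : V → Finset S)
    (hr : ∀ v, d v ∈ r v)
    (hext : Extends r r')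
    (p : ℕ → V) (n : ℕ)
    (hrob : Robust d r p n)
    (j k : ℕ) (hloc : IsLocalSubpath d r p n j k)
    (x : ℕ) (hjx : j ≤ x) (hxk : x ≤ k)
    (hx : rho d r' p x = d (p x)) :
    (∀ y, x ≤ y → y ≤ k → rho d r' p y = d (p x)) ∧
    (∀ y, x ≤ y → y < k → rho d r' p y = rho d r' p (y + 1)) := by
  have key : ∀ y, x ≤ y → y ≤ k → rho d r' p y = d (p x) := by
    intro y hxy hyk
    induction y with
    | zero =>
      have : x = 0 := Nat.le_zero.mp hxy
      simpa [this] using hx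
    | succ m ih =>
      rcases Nat.lt_or_ge x (m + 1) with hlt | hge
      · have hxm : x ≤ m := Nat.lt_succ_iff.mp hlt
        have hmk : m ≤ k := Nat.le_of_succ_le hyk
        have hm : rho d r' p m = d (p x) := ih hxm hmk
        have hmem : d (p x) ∈ r (p (m + 1)) :=
          hrob j k hloc x (m + 1) hjx hlt hyk
        have hmem' : d (p x) ∈ r' (p (m + 1)) := hext _ hmem
        simp [rho, hm, hmem']
      · have : x = m + 1 := le_antisymm hxy hge
        simpa [this] using hx
  refine ⟨key, fun y hxy hyk => ?_⟩
  rw [key y hxy (le_of_lt hyk), key (y + 1) (le_trans hxy (Nat.le_succ y)) hyk]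
end

section
/- If the 3-regular graph G on 2n vertices has a bisection of size K, then the graph H obtained by the triangle-copy construction has a bisection in which each of the two sets contains at most K bridge vertices. -/
open scoped Classical

/-- The triangle-copy construction: the graph `H` on `V × Fin 3` in which the
three copies of every vertex are mutually adjacent, and for every edge
`{u, v}` of `G` there is exactly one inter-copy edge, joining `(u, c u v)` to
`(v, c v u)`, where `c` is the copy-assignment function. -/
def HGraph {V : Type*} (G : SimpleGraph V) (c : V → V → Fin 3) :
    SimpleGraph (V × Fin 3) where
  Adj a b :=
    (a.1 = b.1 ∧ a.2 ≠ b.2) ∨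
    (G.Adj a.1 b.1 ∧ a.2 = c a.1 b.1 ∧ b.2 = c b.1 a.1)
  symm := by
    constructor
    rintro ⟨v, i⟩ ⟨w, j⟩ (⟨h1, h2⟩ | ⟨h1, h2, h3⟩)
    · exact Or.inl ⟨h1.symm, h2.symm⟩
    · exact Or.inr ⟨h1.symm, h3, h2⟩
  loopless := by
    constructor
    rintro ⟨v, i⟩ (⟨_, h2⟩ | ⟨h1, _, _⟩)
    · exact h2 rfl
    · exact G.loopless.irrefl v h1

/-- The condition that the copy-assignment function `c` assigns, for every
edge `{u,v}` of `G`, the single inter-copy edge of `H` in such a way that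
every copy of every vertex is incident to at most one inter-copy edge. -/
def GoodAssignment {V : Type*} (G : SimpleGraph V) (c : V → V → Fin 3) : Prop :=
  ∀ u v w, G.Adj u v → G.Adj u w → v ≠ w → c u v ≠ c u w

/-- The size of the bisection `(A, B)` with respect to the adjacency relation
`Adj`: the number of edges with one endpoint in each set (counted as ordered
pairs `(a, b) ∈ A × B`, which is the same number when `A` and `B` are
disjoint). -/
noncomputable def crossSize {α : Type*} (Adj : α → α → Prop)
    (A B : Finset α) : ℕ :=
  ((A ×ˢ B).filter fun ab => Adj ab.1 ab.2).card

/-- The number of bridge vertices of `A` in the bisection `(A, B)`: vertices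
of `A` having at least one neighbor in `B`. -/
noncomputable def bridgeCount {α : Type*} (Adj : α → α → Prop)
    (A B : Finset α) : ℕ :=
  (A.filter fun a => ∃ b ∈ B, Adj a b).card


lemma crossSize_symm {α : Type*} (Adj : α → α → Prop)
    (hsym : ∀ a b, Adj a b → Adj b a) (A B : Finset α) :
    crossSize Adj A B = crossSize Adj B A := by
  unfold crossSize
  apply Finset.card_bij (fun ab _ => (ab.2, ab.1))
  · rintro ⟨a, b⟩ hab
    simp only [Finset.mem_filter, Finset.mem_product] at hab ⊢
    exact ⟨⟨hab.1.2, hab.1.1⟩, hsym _ _ hab.2⟩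
  · rintro ⟨a, b⟩ _ ⟨a', b'⟩ _ h
    simpa [Prod.ext_iff, and_comm] using h
  · rintro ⟨a, b⟩ hab
    simp only [Finset.mem_filter, Finset.mem_product] at hab
    exact ⟨(b, a), by simp [hab.1.1, hab.1.2, hsym _ _ hab.2]⟩

lemma bridge_le_cross {V : Type*} [Fintype V] [DecidableEq V]
    (G : SimpleGraph V) (c : V → V → Fin 3)
    (A B : Finset V) (hdisj : Disjoint A B) :
    bridgeCount (HGraph G c).Adj (A ×ˢ Finset.univ) (B ×ˢ Finset.univ)
      ≤ crossSize G.Adj A B := by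
  unfold bridgeCount crossSize
  classical
  apply Finset.card_le_card_of_injOn
    (fun a => if h : ∃ b ∈ (B ×ˢ (Finset.univ : Finset (Fin 3))),
        (HGraph G c).Adj a b then (a.1, h.choose.1) else (a.1, a.1))
  · intro a ha
    rw [Finset.mem_coe, Finset.mem_filter] at ha
    beta_reduce
    obtain ⟨hmem, h⟩ := ha
    have hA := (Finset.mem_product.mp hmem).1
    rw [dif_pos h]
    obtain ⟨hbB, hadj⟩ := h.choose_spec
    have hB := (Finset.mem_product.mp hbB).1
    rcases hadj with ⟨h1, -⟩ | ⟨h1, -, -⟩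
    · exact absurd (h1 ▸ hB) (Finset.disjoint_left.mp hdisj hA)
    · rw [Finset.mem_coe, Finset.mem_filter, Finset.mem_product]
      exact ⟨⟨hA, hB⟩, h1⟩
  · have key : ∀ (x : V × Fin 3), x.1 ∈ A →
        ∀ (hex : ∃ b ∈ (B ×ˢ (Finset.univ : Finset (Fin 3))), (HGraph G c).Adj x b),
        x.2 = c x.1 hex.choose.1 := by
      intro x hx hex
      obtain ⟨hb, hadjx⟩ := hex.choose_spec
      have hB := (Finset.mem_product.mp hb).1
      rcases hadjx with ⟨h1, -⟩ | ⟨-, h2, -⟩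
      · exact absurd (h1 ▸ hB) (Finset.disjoint_left.mp hdisj hx)
      · exact h2
    intro a ha a' ha' heq
    rw [Finset.mem_coe, Finset.mem_filter] at ha ha'
    obtain ⟨hmem, h⟩ := ha
    obtain ⟨hmem', h'⟩ := ha'
    have hA := (Finset.mem_product.mp hmem).1
    have hA' := (Finset.mem_product.mp hmem').1
    simp only at heq
    rw [dif_pos h, dif_pos h'] at heq
    obtain ⟨hfst, hsnd⟩ := Prod.ext_iff.mp heq
    simp only at hfst hsnd
    have e1 := key a hA h
    have e2 := key a' hA' h'
    exact Prod.ext hfst (by rw [e1, e2, hfst, hsnd])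

/-- If the 3-regular graph `G` on `2n` vertices has a bisection
of size `K`, then the graph `H` obtained by the triangle-copy construction
has a bisection in which each of the two sets contains at most `K` bridge
vertices. -/
theorem bisection_to_min_bridge_bisection
    {V : Type*} [Fintype V] [DecidableEq V]
    (n K : ℕ)
    (G : SimpleGraph V) [DecidableRel G.Adj]
    (hcard : Fintype.card V = 2 * n)
    (hreg : ∀ v, G.degree v = 3)
    (c : V → V → Fin 3) (hc : GoodAssignment G c)
    (V₁ V₂ : Finset V)
    (hdisj : Disjoint V₁ V₂) (huniv : V₁ ∪ V₂ = Finset.univ)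
    (hV₁ : V₁.card = n) (hV₂ : V₂.card = n)
    (hsize : crossSize G.Adj V₁ V₂ = K) :
    ∃ U₁ U₂ : Finset (V × Fin 3),
      Disjoint U₁ U₂ ∧ U₁ ∪ U₂ = Finset.univ ∧
      U₁.card = 3 * n ∧ U₂.card = 3 * n ∧
      bridgeCount (HGraph G c).Adj U₁ U₂ ≤ K ∧
      bridgeCount (HGraph G c).Adj U₂ U₁ ≤ K := by
  classical
  refine ⟨V₁ ×ˢ Finset.univ, V₂ ×ˢ Finset.univ, ?_, ?_, ?_, ?_, ?_, ?_⟩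
  · exact Finset.disjoint_left.mpr fun a ha hb => by
      simp only [Finset.mem_product] at ha hb
      exact Finset.disjoint_left.mp hdisj ha.1 hb.1
  · ext a
    simp only [Finset.mem_union, Finset.mem_product, Finset.mem_univ, and_true,
      iff_true]
    have := huniv ▸ Finset.mem_univ a.1
    simpa [Finset.mem_union] using this
  · simp [Finset.card_product, hV₁, mul_comm]
  · simp [Finset.card_product, hV₂, mul_comm]
  · rw [← hsize]; exact bridge_le_cross G c V₁ V₂ hdisj
  · rw [← hsize, crossSize_symm G.Adj (fun a b h => h.symm) V₁ V₂]
    exact bridge_le_cross G c V₂ V₁ hdisj.symm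
end

section
/- For every bisection (U₁, U₂) of the graph H obtained from a 3-regular graph G on 2n vertices by the triangle-copy construction, there exists a bisection (U₁', U₂') of H whose size is at most the size of (U₁, U₂) and in which, for every vertex v of G, all three copies (v,1), (v,2), (v,3) lie in the same set of the bisection. -/
open scoped Classical

set_option linter.unusedSectionVars false


noncomputable def cutN {α : Type*} [Fintype α] [DecidableEq α] (Adj : α → α → Prop) (A : Finset α) : ℕ :=
  ∑ a ∈ A, ∑ b ∈ Aᶜ, if Adj a b then 1 else 0

lemma cut_flip {α : Type*} [Fintype α] [DecidableEq α] (Adj : α → α → Prop)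
    (hs : Symmetric Adj) {A : Finset α} {x : α} (hx : x ∈ A) :
    cutN Adj (A.erase x) + (Aᶜ.filter fun b => Adj x b).card
      = cutN Adj A + ((A.erase x).filter fun b => Adj x b).card := by
  classical
  have hcompl : (A.erase x)ᶜ = insert x Aᶜ := by
    ext b
    simp only [Finset.mem_compl, Finset.mem_erase, Finset.mem_insert]
    tauto
  have hxc : x ∉ Aᶜ := by simp [hx]
  have h1 : cutN Adj A
      = (∑ b ∈ Aᶜ, if Adj x b then 1 else 0)
        + ∑ a ∈ A.erase x, ∑ b ∈ Aᶜ, if Adj a b then 1 else 0 := by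
    rw [cutN, ← Finset.add_sum_erase _ _ hx]
  have h2 : cutN Adj (A.erase x)
      = (∑ a ∈ A.erase x, if Adj a x then 1 else 0)
        + ∑ a ∈ A.erase x, ∑ b ∈ Aᶜ, if Adj a b then 1 else 0 := by
    rw [cutN]
    rw [show (∑ a ∈ A.erase x, ∑ b ∈ (A.erase x)ᶜ, if Adj a b then 1 else 0)
        = ∑ a ∈ A.erase x, ((if Adj a x then 1 else 0) + ∑ b ∈ Aᶜ, if Adj a b then 1 else 0) from
      Finset.sum_congr rfl fun a _ => by rw [hcompl, Finset.sum_insert hxc]]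
    rw [Finset.sum_add_distrib]
  have h3 : (Aᶜ.filter fun b => Adj x b).card
      = ∑ b ∈ Aᶜ, if Adj x b then 1 else 0 := Finset.card_filter _ _
  have h4 : ((A.erase x).filter fun b => Adj x b).card
      = ∑ a ∈ A.erase x, if Adj a x then 1 else 0 := by
    rw [Finset.card_filter]
    refine Finset.sum_congr rfl fun a _ => ?_
    by_cases h : Adj x a
    · rw [if_pos h, if_pos (hs h)]
    · rw [if_neg h, if_neg (fun hax => h (hs hax))]
  omega

lemma crossSize_eq_cutN {α : Type*} [Fintype α] [DecidableEq α]
    (Adj : α → α → Prop) (A : Finset α) :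
    crossSize Adj A Aᶜ = cutN Adj A := by
  unfold crossSize cutN
  rw [Finset.card_filter, Finset.sum_product]


section AuxTriangleCopy

variable {V : Type*} [Fintype V] [DecidableEq V] {G : SimpleGraph V} {c : V → V → Fin 3}

lemma hadj_iff {v u : V} {i j : Fin 3} :
    (HGraph G c).Adj (v,i) (u,j) ↔ (v = u ∧ i ≠ j) ∨ (G.Adj v u ∧ i = c v u ∧ j = c u v) :=
  Iff.rfl

lemma hadj_tri {v : V} {i j : Fin 3} (h : i ≠ j) : (HGraph G c).Adj (v,i) (v,j) :=
  Or.inl ⟨rfl, h⟩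

lemma fin3 : ∀ i : Fin 3, ∃ j k, j ≠ i ∧ k ≠ i ∧ j ≠ k ∧ ∀ l, l = i ∨ l = j ∨ l = k := by decide

/-- upper bound on neighbors in any set: triangle neighbors plus at most one inter-copy. -/
lemma nbr_in_le (hc : GoodAssignment G c) (S : Finset (V × Fin 3)) (v : V) (i : Fin 3) :
    (S.filter fun y => (HGraph G c).Adj (v,i) y).card
      ≤ (S.filter fun y => y.1 = v ∧ y ≠ (v,i)).card + 1 := by
  classical
  have hsub : (S.filter fun y => (HGraph G c).Adj (v,i) y)
      ⊆ (S.filter fun y => y.1 = v ∧ y ≠ (v,i))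
        ∪ (S.filter fun y => (HGraph G c).Adj (v,i) y ∧ y.1 ≠ v) := by
    intro y hy
    rw [Finset.mem_filter] at hy
    obtain ⟨hyS, hadj⟩ := hy
    rcases hadj with ⟨h1, h2⟩ | ⟨h1, _, _⟩
    · refine Finset.mem_union_left _ (Finset.mem_filter.mpr ⟨hyS, h1.symm, ?_⟩)
      rintro rfl
      exact h2 rfl
    · refine Finset.mem_union_right _ (Finset.mem_filter.mpr ⟨hyS, ?_, ?_⟩)
      · exact Or.inr ⟨h1, ‹_›, ‹_›⟩
      · exact fun hy1 => G.loopless.irrefl v (hy1 ▸ h1)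
  have hone : (S.filter fun y => (HGraph G c).Adj (v,i) y ∧ y.1 ≠ v).card ≤ 1 := by
    rw [Finset.card_le_one]
    rintro ⟨u, ju⟩ ha ⟨w, jw⟩ hb
    rw [Finset.mem_filter] at ha hb
    obtain ⟨-, hau, hu⟩ := ha
    obtain ⟨-, haw, hw⟩ := hb
    rcases hau with ⟨h1, -⟩ | ⟨h1, h2, h3⟩
    · exact absurd h1.symm hu
    rcases haw with ⟨g1, -⟩ | ⟨g1, g2, g3⟩
    · exact absurd g1.symm hw
    have huw : u = w := by
      by_contra hne
      exact hc v u w h1 g1 hne (h2.symm.trans g2)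
    subst huw
    have : ju = jw := h3.trans g3.symm
    subst this
    rfl
  calc (S.filter fun y => (HGraph G c).Adj (v,i) y).card
      ≤ _ := Finset.card_le_card hsub
    _ ≤ _ + _ := Finset.card_union_le _ _
    _ ≤ _ + 1 := by omega

lemma tri_zero (S : Finset (V × Fin 3)) (v : V) (i : Fin 3)
    (h : ∀ l, l ≠ i → (v,l) ∉ S) :
    (S.filter fun y => y.1 = v ∧ y ≠ (v,i)).card = 0 := by
  rw [Finset.card_eq_zero, Finset.eq_empty_iff_forall_notMem]
  rintro ⟨w, l⟩ hy
  rw [Finset.mem_filter] at hy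
  obtain ⟨hyS, h1, h2⟩ := hy
  cases h1
  exact h l (fun hli => h2 (by rw [hli])) hyS

lemma tri_one (S : Finset (V × Fin 3)) (v : V) (i j : Fin 3)
    (h : ∀ l, l ≠ i → l ≠ j → (v,l) ∉ S) :
    (S.filter fun y => y.1 = v ∧ y ≠ (v,i)).card ≤ 1 := by
  refine le_trans (Finset.card_le_card (fun y hy => ?_)) (Finset.card_singleton (v,j)).le
  rw [Finset.mem_filter] at hy
  obtain ⟨hyS, h1, h2⟩ := hy
  obtain ⟨w, l⟩ := y
  cases h1
  rw [Finset.mem_singleton]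
  by_cases hlj : l = j
  · rw [hlj]
  · exact absurd hyS (h l (fun hli => h2 (by rw [hli])) hlj)

lemma nbr_lb2 (S : Finset (V × Fin 3)) (v : V) (i j k : Fin 3)
    (hji : j ≠ i) (hki : k ≠ i) (hjk : j ≠ k)
    (hj : (v,j) ∈ S) (hk : (v,k) ∈ S) :
    2 ≤ (S.filter fun y => (HGraph G c).Adj (v,i) y).card := by
  have : ({(v,j), (v,k)} : Finset (V × Fin 3)) ⊆ S.filter fun y => (HGraph G c).Adj (v,i) y := by
    intro y hy
    rw [Finset.mem_insert, Finset.mem_singleton] at hy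
    rcases hy with rfl | rfl
    · exact Finset.mem_filter.mpr ⟨hj, hadj_tri (Ne.symm hji)⟩
    · exact Finset.mem_filter.mpr ⟨hk, hadj_tri (Ne.symm hki)⟩
  calc 2 = ({(v,j), (v,k)} : Finset (V × Fin 3)).card := by
        rw [Finset.card_insert_of_notMem (by simp [hjk]), Finset.card_singleton]
    _ ≤ _ := Finset.card_le_card this

lemma nbr_lb1 (S : Finset (V × Fin 3)) (v : V) (i j : Fin 3)
    (hji : j ≠ i) (hj : (v,j) ∈ S) :
    1 ≤ (S.filter fun y => (HGraph G c).Adj (v,i) y).card :=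
  Finset.card_pos.mpr ⟨(v,j), Finset.mem_filter.mpr ⟨hj, hadj_tri (Ne.symm hji)⟩⟩

/-- erase a minority copy: cut drops by at least 1. -/
lemma E_min (hc : GoodAssignment G c) {A : Finset (V × Fin 3)} {v : V} {i j k : Fin 3}
    (hcov : ∀ l, l = i ∨ l = j ∨ l = k)
    (hxi : (v,i) ∈ A) (hj : (v,j) ∉ A) (hk : (v,k) ∉ A) (hji : j ≠ i) (hki : k ≠ i)
    (hjk : j ≠ k) :
    cutN (HGraph G c).Adj (A.erase (v,i)) + 1 ≤ cutN (HGraph G c).Adj A := by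
  have heq := cut_flip (HGraph G c).Adj (fun _ _ h => h.symm) hxi
  have hout : 2 ≤ (Aᶜ.filter fun b => (HGraph G c).Adj (v,i) b).card :=
    nbr_lb2 _ v i j k hji hki hjk (Finset.mem_compl.mpr hj) (Finset.mem_compl.mpr hk)
  have hin : ((A.erase (v,i)).filter fun b => (HGraph G c).Adj (v,i) b).card ≤ 1 := by
    have := nbr_in_le hc (A.erase (v,i)) v i
    rw [tri_zero _ v i ?_] at this
    · omega
    · intro l hl hmem
      rcases hcov l with rfl | rfl | rfl
      · exact hl rfl
      · exact hj (Finset.mem_of_mem_erase hmem)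
      · exact hk (Finset.mem_of_mem_erase hmem)
  omega

/-- erase a copy whose vertex has one other copy inside: cut grows by at most 1. -/
lemma E_maj (hc : GoodAssignment G c) {A : Finset (V × Fin 3)} {v : V} {i j k : Fin 3}
    (hcov : ∀ l, l = i ∨ l = j ∨ l = k)
    (hxi : (v,i) ∈ A) (hj : (v,j) ∈ A) (hk : (v,k) ∉ A) (hki : k ≠ i) (hkj : k ≠ j) :
    cutN (HGraph G c).Adj (A.erase (v,i)) ≤ cutN (HGraph G c).Adj A + 1 := by
  have heq := cut_flip (HGraph G c).Adj (fun _ _ h => h.symm) hxi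
  have hout : 1 ≤ (Aᶜ.filter fun b => (HGraph G c).Adj (v,i) b).card :=
    nbr_lb1 _ v i k hki (Finset.mem_compl.mpr hk)
  have hin : ((A.erase (v,i)).filter fun b => (HGraph G c).Adj (v,i) b).card ≤ 2 := by
    have h1 := nbr_in_le hc (A.erase (v,i)) v i
    have h2 : ((A.erase (v,i)).filter fun y => y.1 = v ∧ y ≠ (v,i)).card ≤ 1 := by
      refine tri_one _ v i j ?_
      intro l hl1 hl2 hmem
      rcases hcov l with rfl | rfl | rfl
      · exact hl1 rfl
      · exact hl2 rfl
      · exact hk (Finset.mem_of_mem_erase hmem)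
    omega
  omega

/-- insert the last missing copy: cut drops by at least 1. -/
lemma I_maj (hc : GoodAssignment G c) {A : Finset (V × Fin 3)} {v : V} {i j k : Fin 3}
    (hcov : ∀ l, l = i ∨ l = j ∨ l = k)
    (hxi : (v,i) ∉ A) (hj : (v,j) ∈ A) (hk : (v,k) ∈ A) (hji : j ≠ i) (hki : k ≠ i)
    (hjk : j ≠ k) :
    cutN (HGraph G c).Adj (insert (v,i) A) + 1 ≤ cutN (HGraph G c).Adj A := by
  set A' := insert (v,i) A with hA'
  have hxA' : (v,i) ∈ A' := Finset.mem_insert_self _ _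
  have heq := cut_flip (HGraph G c).Adj (fun _ _ h => h.symm) hxA'
  rw [Finset.erase_insert hxi] at heq
  have hin : 2 ≤ (A.filter fun b => (HGraph G c).Adj (v,i) b).card :=
    nbr_lb2 _ v i j k hji hki hjk hj hk
  have hout : (A'ᶜ.filter fun b => (HGraph G c).Adj (v,i) b).card ≤ 1 := by
    have h1 := nbr_in_le hc A'ᶜ v i
    rw [tri_zero A'ᶜ v i ?_] at h1
    · omega
    · intro l hl hmem
      rw [Finset.mem_compl] at hmem
      rcases hcov l with rfl | rfl | rfl
      · exact hl rfl
      · exact hmem (Finset.mem_insert_of_mem hj)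
      · exact hmem (Finset.mem_insert_of_mem hk)
  omega

/-- insert a copy whose vertex has one other copy inside: cut grows by at most 1. -/
lemma I_first (hc : GoodAssignment G c) {A : Finset (V × Fin 3)} {v : V} {i j k : Fin 3}
    (hcov : ∀ l, l = i ∨ l = j ∨ l = k)
    (hxi : (v,i) ∉ A) (hj : (v,j) ∈ A) (hk : (v,k) ∉ A) (hji : j ≠ i) (hkj : k ≠ j) :
    cutN (HGraph G c).Adj (insert (v,i) A) ≤ cutN (HGraph G c).Adj A + 1 := by
  set A' := insert (v,i) A with hA'
  have hxA' : (v,i) ∈ A' := Finset.mem_insert_self _ _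
  have heq := cut_flip (HGraph G c).Adj (fun _ _ h => h.symm) hxA'
  rw [Finset.erase_insert hxi] at heq
  have hin : 1 ≤ (A.filter fun b => (HGraph G c).Adj (v,i) b).card :=
    nbr_lb1 _ v i j hji hj
  have hout : (A'ᶜ.filter fun b => (HGraph G c).Adj (v,i) b).card ≤ 2 := by
    have h1 := nbr_in_le hc A'ᶜ v i
    have h2 : (A'ᶜ.filter fun y => y.1 = v ∧ y ≠ (v,i)).card ≤ 1 := by
      refine tri_one _ v i k ?_
      intro l hl1 hl2 hmem
      rw [Finset.mem_compl] at hmem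
      rcases hcov l with rfl | rfl | rfl
      · exact hl1 rfl
      · exact hmem (Finset.mem_insert_of_mem hj)
      · exact hl2 rfl
    omega
  omega

noncomputable def cnt (A : Finset (V × Fin 3)) (v : V) : ℕ :=
  (Finset.univ.filter fun i : Fin 3 => (v,i) ∈ A).card

lemma cnt_le_three (A : Finset (V × Fin 3)) (v : V) : cnt A v ≤ 3 := by
  have := Finset.card_filter_le (Finset.univ : Finset (Fin 3)) (fun i => (v,i) ∈ A)
  simpa [cnt] using this

lemma cnt_congr {A B : Finset (V × Fin 3)} {v : V}
    (h : ∀ l, (v,l) ∈ B ↔ (v,l) ∈ A) : cnt B v = cnt A v := by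
  unfold cnt
  congr 1
  exact Finset.filter_congr fun i _ => h i

lemma cnt_eq_three {A : Finset (V × Fin 3)} {v : V} (h : ∀ i, (v,i) ∈ A) :
    cnt A v = 3 := by
  unfold cnt
  rw [Finset.filter_true_of_mem (fun i _ => h i)]
  simp

lemma cnt_eq_zero {A : Finset (V × Fin 3)} {v : V} (h : ∀ i, (v,i) ∉ A) :
    cnt A v = 0 := by
  unfold cnt
  rw [Finset.filter_false_of_mem (fun i _ => h i)]
  simp

lemma filter_subset_singleton {A : Finset (V × Fin 3)} {v : V} {m : Fin 3}
    (h : ∀ l, l ≠ m → (v,l) ∉ A) :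
    (Finset.univ.filter fun i : Fin 3 => (v,i) ∈ A) ⊆ {m} := by
  intro l hl
  rw [Finset.mem_filter] at hl
  rw [Finset.mem_singleton]
  by_contra hlm
  exact h l hlm hl.2

lemma cnt_two_extract {A : Finset (V × Fin 3)} {v : V} (h : cnt A v = 2) :
    ∃ i j k : Fin 3, (j ≠ i ∧ k ≠ i ∧ j ≠ k ∧ ∀ l, l = i ∨ l = j ∨ l = k) ∧
      (v,i) ∉ A ∧ (v,j) ∈ A ∧ (v,k) ∈ A := by
  classical
  have hex : ∃ i, (v,i) ∉ A := by
    by_contra hall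
    push_neg at hall
    have := cnt_eq_three hall
    omega
  obtain ⟨i, hi⟩ := hex
  obtain ⟨j, k, hji, hki, hjk, hcov⟩ := fin3 i
  have hj : (v,j) ∈ A := by
    by_contra hj
    have hsub : (Finset.univ.filter fun l : Fin 3 => (v,l) ∈ A) ⊆ {k} :=
      filter_subset_singleton (fun l hlk => by
        rcases hcov l with rfl | rfl | rfl
        · exact hi
        · exact hj
        · exact absurd rfl hlk)
    have := Finset.card_le_card hsub
    rw [Finset.card_singleton] at this
    unfold cnt at h
    omega
  have hk : (v,k) ∈ A := by
    by_contra hk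
    have hsub : (Finset.univ.filter fun l : Fin 3 => (v,l) ∈ A) ⊆ {j} :=
      filter_subset_singleton (fun l hlj => by
        rcases hcov l with rfl | rfl | rfl
        · exact hi
        · exact absurd rfl hlj
        · exact hk)
    have := Finset.card_le_card hsub
    rw [Finset.card_singleton] at this
    unfold cnt at h
    omega
  exact ⟨i, j, k, ⟨hji, hki, hjk, hcov⟩, hi, hj, hk⟩

lemma cnt_one_extract {A : Finset (V × Fin 3)} {v : V} (h : cnt A v = 1) :
    ∃ i j k : Fin 3, (j ≠ i ∧ k ≠ i ∧ j ≠ k ∧ ∀ l, l = i ∨ l = j ∨ l = k) ∧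
      (v,i) ∈ A ∧ (v,j) ∉ A ∧ (v,k) ∉ A := by
  classical
  have hex : ∃ i, (v,i) ∈ A := by
    by_contra hall
    push_neg at hall
    have := cnt_eq_zero hall
    omega
  obtain ⟨i, hi⟩ := hex
  obtain ⟨j, k, hji, hki, hjk, hcov⟩ := fin3 i
  have key : ∀ m : Fin 3, m ≠ i → (v,m) ∉ A := by
    intro m hmi hm
    have hsub : ({i, m} : Finset (Fin 3)) ⊆ (Finset.univ.filter fun l : Fin 3 => (v,l) ∈ A) := by
      intro l hl
      rw [Finset.mem_insert, Finset.mem_singleton] at hl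
      rcases hl with rfl | rfl
      · exact Finset.mem_filter.mpr ⟨Finset.mem_univ _, hi⟩
      · exact Finset.mem_filter.mpr ⟨Finset.mem_univ _, hm⟩
    have := Finset.card_le_card hsub
    rw [Finset.card_insert_of_notMem (by simp [Ne.symm hmi]), Finset.card_singleton] at this
    unfold cnt at h
    omega
  exact ⟨i, j, k, ⟨hji, hki, hjk, hcov⟩, hi, key j hji, key k hki⟩

section Fix
variable (hc : GoodAssignment G c)
include hc

lemma fixUp2 {A : Finset (V × Fin 3)} {v : V} (h2 : cnt A v = 2) :
    ∃ A' : Finset (V × Fin 3), A'.card = A.card + 1 ∧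
      cutN (HGraph G c).Adj A' + 1 ≤ cutN (HGraph G c).Adj A ∧
      (∀ l, (v,l) ∈ A') ∧ (∀ w, w ≠ v → ∀ l, ((w,l) ∈ A' ↔ (w,l) ∈ A)) := by
  obtain ⟨i, j, k, ⟨hji, hki, hjk, hcov⟩, hi, hj, hk⟩ := cnt_two_extract h2
  refine ⟨insert (v,i) A, Finset.card_insert_of_notMem hi,
    I_maj hc hcov hi hj hk hji hki hjk, ?_, ?_⟩
  · intro l
    rcases hcov l with rfl | rfl | rfl
    · exact Finset.mem_insert_self _ _
    · exact Finset.mem_insert_of_mem hj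
    · exact Finset.mem_insert_of_mem hk
  · intro w hw l
    rw [Finset.mem_insert]
    simp only [Prod.mk.injEq]
    constructor
    · rintro (⟨rfl, rfl⟩ | h)
      · exact absurd rfl hw
      · exact h
    · exact Or.inr

lemma fixDown2 {A : Finset (V × Fin 3)} {v : V} (h2 : cnt A v = 2) :
    ∃ A' : Finset (V × Fin 3), A'.card + 2 = A.card ∧
      cutN (HGraph G c).Adj A' ≤ cutN (HGraph G c).Adj A ∧
      (∀ l, (v,l) ∉ A') ∧ (∀ w, w ≠ v → ∀ l, ((w,l) ∈ A' ↔ (w,l) ∈ A)) := by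
  obtain ⟨i, j, k, ⟨hji, hki, hjk, hcov⟩, hi, hj, hk⟩ := cnt_two_extract h2
  set A1 := A.erase (v,j) with hA1
  have step1 : cutN (HGraph G c).Adj A1 ≤ cutN (HGraph G c).Adj A + 1 :=
    E_maj hc (fun l => by rcases hcov l with h | h | h <;> tauto) hj hk hi (Ne.symm hji) (Ne.symm hki)
  have hkA1 : (v,k) ∈ A1 := Finset.mem_erase.mpr ⟨by simp [hjk.symm], hk⟩
  have hiA1 : (v,i) ∉ A1 := fun hm => hi (Finset.mem_of_mem_erase hm)
  have hjA1 : (v,j) ∉ A1 := Finset.notMem_erase _ _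
  set A2 := A1.erase (v,k) with hA2
  have step2 : cutN (HGraph G c).Adj A2 + 1 ≤ cutN (HGraph G c).Adj A1 :=
    E_min hc (fun l => by rcases hcov l with h | h | h <;> tauto) hkA1 hiA1 hjA1 (Ne.symm hki) hjk (Ne.symm hji)
  have hc1 : A1.card + 1 = A.card := Finset.card_erase_add_one hj
  have hc2 : A2.card + 1 = A1.card := Finset.card_erase_add_one hkA1
  refine ⟨A2, by omega, by omega, ?_, ?_⟩
  · intro l
    rcases hcov l with rfl | rfl | rfl
    · exact fun hm => hiA1 (Finset.mem_of_mem_erase hm)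
    · exact fun hm => hjA1 (Finset.mem_of_mem_erase hm)
    · exact Finset.notMem_erase _ _
  · intro w hw l
    have h1 : (w,l) ≠ (v,j) := by simp [hw]
    have h2 : (w,l) ≠ (v,k) := by simp [hw]
    rw [hA2, Finset.mem_erase, hA1, Finset.mem_erase]
    tauto

lemma fixUp1 {A : Finset (V × Fin 3)} {v : V} (h1 : cnt A v = 1) :
    ∃ A' : Finset (V × Fin 3), A'.card = A.card + 2 ∧
      cutN (HGraph G c).Adj A' ≤ cutN (HGraph G c).Adj A ∧
      (∀ l, (v,l) ∈ A') ∧ (∀ w, w ≠ v → ∀ l, ((w,l) ∈ A' ↔ (w,l) ∈ A)) := by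
  obtain ⟨i, j, k, ⟨hji, hki, hjk, hcov⟩, hi, hj, hk⟩ := cnt_one_extract h1
  set A1 := insert (v,j) A with hA1
  have step1 : cutN (HGraph G c).Adj A1 ≤ cutN (HGraph G c).Adj A + 1 :=
    I_first hc (fun l => by rcases hcov l with h | h | h <;> tauto) hj hi hk (Ne.symm hji) hki
  have hiA1 : (v,i) ∈ A1 := Finset.mem_insert_of_mem hi
  have hjA1 : (v,j) ∈ A1 := Finset.mem_insert_self _ _
  have hkA1 : (v,k) ∉ A1 := by
    rw [hA1, Finset.mem_insert]
    push_neg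
    refine ⟨by simp [hjk.symm], hk⟩
  set A2 := insert (v,k) A1 with hA2
  have step2 : cutN (HGraph G c).Adj A2 + 1 ≤ cutN (HGraph G c).Adj A1 :=
    I_maj hc (fun l => by rcases hcov l with h | h | h <;> tauto) hkA1 hiA1 hjA1 (Ne.symm hki) hjk (Ne.symm hji)
  have hc1 : A1.card = A.card + 1 := Finset.card_insert_of_notMem hj
  have hc2 : A2.card = A1.card + 1 := Finset.card_insert_of_notMem hkA1
  refine ⟨A2, by omega, by omega, ?_, ?_⟩
  · intro l
    rcases hcov l with rfl | rfl | rfl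
    · exact Finset.mem_insert_of_mem hiA1
    · exact Finset.mem_insert_of_mem hjA1
    · exact Finset.mem_insert_self _ _
  · intro w hw l
    have h1 : (w,l) ≠ (v,j) := by simp [hw]
    have h2 : (w,l) ≠ (v,k) := by simp [hw]
    rw [hA2, Finset.mem_insert, hA1, Finset.mem_insert]
    constructor
    · rintro (h | h | h)
      · exact absurd h h2
      · exact absurd h h1
      · exact h
    · exact fun h => Or.inr (Or.inr h)

lemma fixDown1 {A : Finset (V × Fin 3)} {v : V} (h1 : cnt A v = 1) :
    ∃ A' : Finset (V × Fin 3), A'.card + 1 = A.card ∧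
      cutN (HGraph G c).Adj A' + 1 ≤ cutN (HGraph G c).Adj A ∧
      (∀ l, (v,l) ∉ A') ∧ (∀ w, w ≠ v → ∀ l, ((w,l) ∈ A' ↔ (w,l) ∈ A)) := by
  obtain ⟨i, j, k, ⟨hji, hki, hjk, hcov⟩, hi, hj, hk⟩ := cnt_one_extract h1
  refine ⟨A.erase (v,i), Finset.card_erase_add_one hi,
    E_min hc hcov hi hj hk hji hki hjk, ?_, ?_⟩
  · intro l
    rcases hcov l with rfl | rfl | rfl
    · exact Finset.notMem_erase _ _
    · exact fun hm => hj (Finset.mem_of_mem_erase hm)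
    · exact fun hm => hk (Finset.mem_of_mem_erase hm)
  · intro w hw l
    have : (w,l) ≠ (v,i) := by simp [hw]
    rw [Finset.mem_erase]
    tauto

end Fix

def SplitV (A : Finset (V × Fin 3)) (v : V) : Prop :=
  (∃ i, (v,i) ∈ A) ∧ (∃ i, (v,i) ∉ A)

noncomputable def splitCount (A : Finset (V × Fin 3)) : ℕ :=
  (Finset.univ.filter fun v => SplitV A v).card

lemma not_split_all_in {A : Finset (V × Fin 3)} {v : V} (h : ∀ i, (v,i) ∈ A) :
    ¬ SplitV A v := fun hs => hs.2.choose_spec (h _)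

lemma not_split_all_out {A : Finset (V × Fin 3)} {v : V} (h : ∀ i, (v,i) ∉ A) :
    ¬ SplitV A v := fun hs => h _ hs.1.choose_spec

lemma split_congr {A B : Finset (V × Fin 3)} {v : V}
    (h : ∀ l, (v,l) ∈ B ↔ (v,l) ∈ A) : SplitV B v ↔ SplitV A v := by
  unfold SplitV
  rw [exists_congr h, exists_congr (fun l => not_congr (h l))]

lemma split_iff_cnt {A : Finset (V × Fin 3)} {v : V} :
    SplitV A v ↔ cnt A v = 1 ∨ cnt A v = 2 := by
  constructor
  · rintro ⟨⟨i, hi⟩, ⟨j, hj⟩⟩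
    have h1 : 0 < cnt A v :=
      Finset.card_pos.mpr ⟨i, Finset.mem_filter.mpr ⟨Finset.mem_univ _, hi⟩⟩
    have h3 := cnt_le_three A v
    have h2 : cnt A v ≠ 3 := by
      intro hcnt
      have huniv : (Finset.univ.filter fun i : Fin 3 => (v,i) ∈ A) = Finset.univ :=
        Finset.eq_univ_of_card _ (by simpa [cnt] using hcnt)
      have : j ∈ Finset.univ.filter fun i : Fin 3 => (v,i) ∈ A := by
        rw [huniv]; exact Finset.mem_univ _
      exact hj (Finset.mem_filter.mp this).2
    omega
  · intro h
    have h1 : 0 < cnt A v := by omega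
    obtain ⟨i, hi⟩ := Finset.card_pos.mp h1
    have hex : ∃ j, (v,j) ∉ A := by
      by_contra hall
      push_neg at hall
      have := cnt_eq_three hall
      omega
    exact ⟨⟨i, (Finset.mem_filter.mp hi).2⟩, hex⟩

lemma splitCount_lt {A A2 : Finset (V × Fin 3)} (w : V)
    (h1 : SplitV A w) (h2 : ¬ SplitV A2 w)
    (h3 : ∀ u, SplitV A2 u → SplitV A u) : splitCount A2 < splitCount A := by
  apply Finset.card_lt_card
  have hsub : (Finset.univ.filter fun v => SplitV A2 v) ⊆ Finset.univ.filter fun v => SplitV A v :=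
    fun u hu => Finset.mem_filter.mpr ⟨Finset.mem_univ _, h3 u (Finset.mem_filter.mp hu).2⟩
  rw [Finset.ssubset_iff_of_subset hsub]
  exact ⟨w, Finset.mem_filter.mpr ⟨Finset.mem_univ _, h1⟩,
    fun hw => h2 (Finset.mem_filter.mp hw).2⟩

lemma card_eq_sum_cnt (A : Finset (V × Fin 3)) : A.card = ∑ v, cnt A v := by
  classical
  rw [Finset.card_eq_sum_card_fiberwise (f := Prod.fst)
    (fun x _ => Finset.mem_univ x.1) (t := Finset.univ)]
  refine Finset.sum_congr rfl fun v _ => ?_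
  unfold cnt
  refine Finset.card_bij (fun y _ => y.2) ?_ ?_ ?_
  · intro a ha
    rw [Finset.mem_filter] at ha
    refine Finset.mem_filter.mpr ⟨Finset.mem_univ _, ?_⟩
    have : (v, a.2) = a := by
      rw [← ha.2]
    rw [this]
    exact ha.1
  · intro a₁ ha₁ a₂ ha₂ heq
    rw [Finset.mem_filter] at ha₁ ha₂
    exact Prod.ext (ha₁.2.trans ha₂.2.symm) heq
  · intro b hb
    rw [Finset.mem_filter] at hb
    exact ⟨(v, b), Finset.mem_filter.mpr ⟨hb.2, rfl⟩, rfl⟩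

lemma dvd_card_class {A : Finset (V × Fin 3)} (m : ℕ) (hm : m = 1 ∨ m = 2)
    (hA : 3 ∣ A.card)
    (hall : ∀ v, cnt A v = 0 ∨ cnt A v = m ∨ cnt A v = 3) :
    3 ∣ (Finset.univ.filter fun v => cnt A v = m).card := by
  classical
  have hsum := card_eq_sum_cnt A
  rw [← Finset.sum_filter_add_sum_filter_not Finset.univ (fun v => cnt A v = m)] at hsum
  have h1 : ∑ v ∈ Finset.univ.filter (fun v => cnt A v = m), cnt A v
      = m * (Finset.univ.filter fun v => cnt A v = m).card := by
    rw [Finset.sum_congr rfl (fun v hv => (Finset.mem_filter.mp hv).2),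
      Finset.sum_const, smul_eq_mul, mul_comm]
  have h2 : 3 ∣ ∑ v ∈ Finset.univ.filter (fun v => ¬ cnt A v = m), cnt A v := by
    refine Finset.dvd_sum fun v hv => ?_
    have hvne := (Finset.mem_filter.mp hv).2
    rcases hall v with h | h | h
    · simp [h]
    · exact absurd h hvne
    · simp [h]
  rw [h1] at hsum
  obtain ⟨a, ha⟩ := h2
  obtain ⟨b, hb⟩ := hA
  rcases hm with rfl | rfl <;> omega

lemma all_or_none_of_splitCount_zero {A : Finset (V × Fin 3)} (h : splitCount A = 0) :
    ∀ v, (∀ i, (v,i) ∈ A) ∨ (∀ i, (v,i) ∉ A) := by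
  intro v
  have hv : ¬ SplitV A v := by
    intro hsv
    have hmem : v ∈ Finset.univ.filter fun v => SplitV A v :=
      Finset.mem_filter.mpr ⟨Finset.mem_univ _, hsv⟩
    unfold splitCount at h
    rw [Finset.card_eq_zero.mp h] at hmem
    exact absurd hmem (Finset.notMem_empty v)
  by_cases hall : ∀ i, (v,i) ∈ A
  · exact Or.inl hall
  · push_neg at hall
    obtain ⟨i, hi⟩ := hall
    exact Or.inr fun j hj => hv ⟨⟨j, hj⟩, ⟨i, hi⟩⟩

lemma three_distinct {P : Finset V} (h : 3 ≤ P.card) :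
    ∃ v1 v2 v3, v1 ∈ P ∧ v2 ∈ P ∧ v3 ∈ P ∧ v1 ≠ v2 ∧ v1 ≠ v3 ∧ v2 ≠ v3 := by
  obtain ⟨v1, hv1⟩ := Finset.card_pos.mp (lt_of_lt_of_le (by norm_num) h)
  have h2 : 0 < (P.erase v1).card := by rw [Finset.card_erase_of_mem hv1]; omega
  obtain ⟨v2, hv2⟩ := Finset.card_pos.mp h2
  have h3 : 0 < ((P.erase v1).erase v2).card := by
    rw [Finset.card_erase_of_mem hv2, Finset.card_erase_of_mem hv1]; omega
  obtain ⟨v3, hv3⟩ := Finset.card_pos.mp h3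
  obtain ⟨h32, hv3'⟩ := Finset.mem_erase.mp hv3
  obtain ⟨h31, hv3''⟩ := Finset.mem_erase.mp hv3'
  obtain ⟨h21, hv2'⟩ := Finset.mem_erase.mp hv2
  exact ⟨v1, v2, v3, hv1, hv2', hv3'', Ne.symm h21, Ne.symm h31, Ne.symm h32⟩

lemma main_lemma (hc : GoodAssignment G c) :
    ∀ (s : ℕ) (A : Finset (V × Fin 3)), splitCount A ≤ s → 3 ∣ A.card →
    ∃ B : Finset (V × Fin 3), B.card = A.card ∧
      cutN (HGraph G c).Adj B ≤ cutN (HGraph G c).Adj A ∧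
      ∀ v, (∀ i, (v,i) ∈ B) ∨ (∀ i, (v,i) ∉ B) := by
  intro s
  induction s with
  | zero =>
    intro A h0 _
    exact ⟨A, rfl, le_rfl, all_or_none_of_splitCount_zero (Nat.le_zero.mp h0)⟩
  | succ s ih =>
    intro A hs hdvd
    by_cases h0 : splitCount A = 0
    · exact ⟨A, rfl, le_rfl, all_or_none_of_splitCount_zero h0⟩
    have hpos : 0 < splitCount A := Nat.pos_of_ne_zero h0
    obtain ⟨v0, hv0⟩ := Finset.card_pos.mp hpos
    have hv0s : SplitV A v0 := (Finset.mem_filter.mp hv0).2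
    by_cases hq : ∃ w, cnt A w = 1 <;> by_cases hp : ∃ w, cnt A w = 2
    · -- M1 : one of each
      obtain ⟨w1, hw1⟩ := hq
      obtain ⟨w2, hw2⟩ := hp
      have hne : w1 ≠ w2 := by rintro rfl; omega
      obtain ⟨A1, hcard1, hcut1, hin1, hpres1⟩ := fixUp2 hc hw2
      have hw1A1 : cnt A1 w1 = 1 := (cnt_congr (hpres1 w1 hne)).trans hw1
      obtain ⟨A2, hcard2, hcut2, hout2, hpres2⟩ := fixDown1 hc hw1A1
      have hin1' : ∀ l, (w2,l) ∈ A2 := fun l => (hpres2 w2 (Ne.symm hne) l).mpr (hin1 l)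
      have hlt : splitCount A2 < splitCount A := by
        refine splitCount_lt w2 (split_iff_cnt.mpr (Or.inr hw2)) (not_split_all_in hin1') ?_
        intro u hu
        by_cases hu1 : u = w1
        · exact absurd hu (hu1 ▸ not_split_all_out hout2)
        by_cases hu2 : u = w2
        · exact absurd hu (hu2 ▸ not_split_all_in hin1')
        · exact (split_congr fun l => (hpres2 u hu1 l).trans (hpres1 u hu2 l)).mp hu
      obtain ⟨B, hB1, hB2, hB3⟩ := ih A2 (by omega)
        (by rw [show A2.card = A.card by omega]; exact hdvd)
      exact ⟨B, by omega, by omega, hB3⟩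
    · -- M3 : only vertices with one copy inside (and full/empty ones)
      push_neg at hp
      have hall : ∀ v, cnt A v = 0 ∨ cnt A v = 1 ∨ cnt A v = 3 := fun v => by
        have h1 := cnt_le_three A v
        have h2 := hp v
        omega
      have hdvdQ := dvd_card_class 1 (Or.inl rfl) hdvd hall
      obtain ⟨w1, hw1⟩ := hq
      have hQ3 : 3 ≤ (Finset.univ.filter fun v => cnt A v = 1).card :=
        Nat.le_of_dvd (Finset.card_pos.mpr
          ⟨w1, Finset.mem_filter.mpr ⟨Finset.mem_univ _, hw1⟩⟩) hdvdQ
      obtain ⟨v1, v2, v3, hv1, hv2, hv3, h12, h13, h23⟩ := three_distinct hQ3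
      have hcnt1 : cnt A v1 = 1 := (Finset.mem_filter.mp hv1).2
      have hcnt2 : cnt A v2 = 1 := (Finset.mem_filter.mp hv2).2
      have hcnt3 : cnt A v3 = 1 := (Finset.mem_filter.mp hv3).2
      obtain ⟨A1, hcard1, hcut1, hout1, hpres1⟩ := fixDown1 hc hcnt1
      have hcnt2A1 : cnt A1 v2 = 1 := (cnt_congr (hpres1 v2 (Ne.symm h12))).trans hcnt2
      obtain ⟨A2, hcard2, hcut2, hout2, hpres2⟩ := fixDown1 hc hcnt2A1
      have hcnt3A2 : cnt A2 v3 = 1 :=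
        (cnt_congr (hpres2 v3 (Ne.symm h23))).trans
          ((cnt_congr (hpres1 v3 (Ne.symm h13))).trans hcnt3)
      obtain ⟨A3, hcard3, hcut3, hin3, hpres3⟩ := fixUp1 hc hcnt3A2
      have hv1out : ∀ l, (v1,l) ∉ A3 := fun l hm =>
        hout1 l ((hpres2 v1 h12 l).mp ((hpres3 v1 h13 l).mp hm))
      have hv2out : ∀ l, (v2,l) ∉ A3 := fun l hm =>
        hout2 l ((hpres3 v2 h23 l).mp hm)
      have hlt : splitCount A3 < splitCount A := by
        refine splitCount_lt v1 (split_iff_cnt.mpr (Or.inl hcnt1)) (not_split_all_out hv1out) ?_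
        intro u hu
        by_cases hu1 : u = v1
        · exact absurd hu (hu1 ▸ not_split_all_out hv1out)
        by_cases hu2 : u = v2
        · exact absurd hu (hu2 ▸ not_split_all_out hv2out)
        by_cases hu3 : u = v3
        · exact absurd hu (hu3 ▸ not_split_all_in hin3)
        · exact (split_congr fun l =>
            ((hpres3 u hu3 l).trans ((hpres2 u hu2 l).trans (hpres1 u hu1 l)))).mp hu
      obtain ⟨B, hB1, hB2, hB3⟩ := ih A3 (by omega)
        (by rw [show A3.card = A.card by omega]; exact hdvd)
      exact ⟨B, by omega, by omega, hB3⟩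
    · -- M2 : only vertices with two copies inside (and full/empty ones)
      push_neg at hq
      have hall : ∀ v, cnt A v = 0 ∨ cnt A v = 2 ∨ cnt A v = 3 := fun v => by
        have h1 := cnt_le_three A v
        have h2 := hq v
        omega
      have hdvdP := dvd_card_class 2 (Or.inr rfl) hdvd hall
      obtain ⟨w2, hw2⟩ := hp
      have hP3 : 3 ≤ (Finset.univ.filter fun v => cnt A v = 2).card :=
        Nat.le_of_dvd (Finset.card_pos.mpr
          ⟨w2, Finset.mem_filter.mpr ⟨Finset.mem_univ _, hw2⟩⟩) hdvdP
      obtain ⟨v1, v2, v3, hv1, hv2, hv3, h12, h13, h23⟩ := three_distinct hP3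
      have hcnt1 : cnt A v1 = 2 := (Finset.mem_filter.mp hv1).2
      have hcnt2 : cnt A v2 = 2 := (Finset.mem_filter.mp hv2).2
      have hcnt3 : cnt A v3 = 2 := (Finset.mem_filter.mp hv3).2
      obtain ⟨A1, hcard1, hcut1, hin1, hpres1⟩ := fixUp2 hc hcnt1
      have hcnt2A1 : cnt A1 v2 = 2 := (cnt_congr (hpres1 v2 (Ne.symm h12))).trans hcnt2
      obtain ⟨A2, hcard2, hcut2, hin2, hpres2⟩ := fixUp2 hc hcnt2A1
      have hcnt3A2 : cnt A2 v3 = 2 :=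
        (cnt_congr (hpres2 v3 (Ne.symm h23))).trans
          ((cnt_congr (hpres1 v3 (Ne.symm h13))).trans hcnt3)
      obtain ⟨A3, hcard3, hcut3, hout3, hpres3⟩ := fixDown2 hc hcnt3A2
      have hv1in : ∀ l, (v1,l) ∈ A3 := fun l =>
        (hpres3 v1 h13 l).mpr ((hpres2 v1 h12 l).mpr (hin1 l))
      have hv2in : ∀ l, (v2,l) ∈ A3 := fun l =>
        (hpres3 v2 h23 l).mpr (hin2 l)
      have hlt : splitCount A3 < splitCount A := by
        refine splitCount_lt v1 (split_iff_cnt.mpr (Or.inr hcnt1)) (not_split_all_in hv1in) ?_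
        intro u hu
        by_cases hu1 : u = v1
        · exact absurd hu (hu1 ▸ not_split_all_in hv1in)
        by_cases hu2 : u = v2
        · exact absurd hu (hu2 ▸ not_split_all_in hv2in)
        by_cases hu3 : u = v3
        · exact absurd hu (hu3 ▸ not_split_all_out hout3)
        · exact (split_congr fun l =>
            ((hpres3 u hu3 l).trans ((hpres2 u hu2 l).trans (hpres1 u hu1 l)))).mp hu
      obtain ⟨B, hB1, hB2, hB3⟩ := ih A3 (by omega)
        (by rw [show A3.card = A.card by omega]; exact hdvd)
      exact ⟨B, by omega, by omega, hB3⟩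
    · -- impossible: a split vertex has one or two copies inside
      push_neg at hq hp
      rcases split_iff_cnt.mp hv0s with h | h
      · exact absurd h (hq v0)
      · exact absurd h (hp v0)

end AuxTriangleCopy

/-- For every bisection `(U₁, U₂)` of the graph `H` obtained
from a 3-regular graph `G` on `2n` vertices by the triangle-copy
construction, there exists a bisection `(U₁', U₂')` of `H` whose size is at
most the size of `(U₁, U₂)` and in which, for every vertex `v` of `G`, all
three copies of `v` lie in the same set of the bisection. -/
theorem bisection_can_keep_copies_together
    {V : Type*} [Fintype V] [DecidableEq V]
    (n : ℕ)
    (G : SimpleGraph V) [DecidableRel G.Adj]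
    (hcard : Fintype.card V = 2 * n)
    (hreg : ∀ v, G.degree v = 3)
    (c : V → V → Fin 3) (hc : GoodAssignment G c)
    (U₁ U₂ : Finset (V × Fin 3))
    (hdisj : Disjoint U₁ U₂) (huniv : U₁ ∪ U₂ = Finset.univ)
    (hU₁ : U₁.card = 3 * n) (hU₂ : U₂.card = 3 * n) :
    ∃ U₁' U₂' : Finset (V × Fin 3),
      Disjoint U₁' U₂' ∧ U₁' ∪ U₂' = Finset.univ ∧
      U₁'.card = 3 * n ∧ U₂'.card = 3 * n ∧
      crossSize (HGraph G c).Adj U₁' U₂' ≤ crossSize (HGraph G c).Adj U₁ U₂ ∧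
      ∀ v : V, (∀ i : Fin 3, (v, i) ∈ U₁') ∨ (∀ i : Fin 3, (v, i) ∈ U₂') := by
  classical
  have hU2c : U₂ = U₁ᶜ := by
    ext x
    rw [Finset.mem_compl]
    constructor
    · intro hx hxx
      exact (Finset.disjoint_left.mp hdisj) hxx hx
    · intro hx
      have hxu : x ∈ U₁ ∪ U₂ := huniv ▸ Finset.mem_univ x
      rcases Finset.mem_union.mp hxu with h | h
      · exact absurd h hx
      · exact h
  obtain ⟨B, hB1, hB2, hB3⟩ := main_lemma hc (splitCount U₁) U₁ le_rfl
    (by rw [hU₁]; exact Dvd.intro n rfl)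
  have htot : Fintype.card (V × Fin 3) = 6 * n := by
    rw [Fintype.card_prod, hcard, Fintype.card_fin]
    ring
  refine ⟨B, Bᶜ, disjoint_compl_right, Finset.union_compl _, ?_, ?_, ?_, ?_⟩
  · rw [hB1, hU₁]
  · rw [Finset.card_compl, hB1, hU₁, htot]
    omega
  · rw [hU2c, crossSize_eq_cutN, crossSize_eq_cutN]
    exact hB2
  · intro v
    rcases hB3 v with h | h
    · exact Or.inl h
    · exact Or.inr fun i => Finset.mem_compl.mpr (h i)
end
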